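/- arXiv:1407.1986 — 4 statements merged into one kernel-verified Lean document; each statement's English description precedes it below -/
import Mathlib

section
/- There exist positive constants Ĉ₀ and C₀ (depending only on ε and c) such that Ĉ₀·ψ₂(r) ≤ ψ₁(r) ≤ C₀·ψ₂(r) for all r > 0. -/
/-!
With `a = c - ε`, the Gaussian tail `T(s) = ∫_s^∞ e^{-a u²/2} du` is comparable to
`e^{-a s²/2} / (1 + s)` for `s ≥ 0`: from below by integrating over `(s, s + 1/(1+s)]`, from above
because `u² ≥ s² + (u - s)²` bounds `T(s)` by a shifted full Gaussian integral while
`s T(s) ≤ ∫_s^∞ u e^{-a u²/2} du = e^{-a s²/2} / a`. Since `e^{c s²/2} e^{-a s²/2} = e^{ε s²/2}`,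
`ψ₁` is therefore comparable to `J(r) = ∫_0^r e^{ε s²/2} / (1 + s) ds`.

Writing `e^{ε r²/2} - 1 = ∫_0^r ε s e^{ε s²/2} ds` gives `ψ₂ ≤ ε J` at once. Conversely the
integrand of `J` is at most `e^{ε r²/8}` on `[0, r/2]` and at most `4 s e^{ε s²/2} / (r (1 + r))`
on `[r/2, r]`, and `r e^{ε r²/8} = O(ψ₂(r))` because
`e^{ε r²/2} - 1 ≥ e^{ε r²/8} (e^{3ε r²/8} - 1)`.
-/


open MeasureTheory Real

/-- `ψ₁ c ε r = ∫₀^r e^{c s²/2} (∫_s^∞ e^{-(c-ε) u²/2} du) ds`. -/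
noncomputable def psi1 (c ε r : ℝ) : ℝ :=
  ∫ s in (0:ℝ)..r, Real.exp (c * s ^ 2 / 2) * ∫ u in Set.Ioi s, Real.exp (-(c - ε) * u ^ 2 / 2)

/-- `ψ₂ ε r = (e^{ε r²/2} - 1)/(r(1+r))`. -/
noncomputable def psi2 (ε r : ℝ) : ℝ :=
  (Real.exp (ε * r ^ 2 / 2) - 1) / (r * (1 + r))

open Set Filter Topology

noncomputable def gaussTail (a s : ℝ) : ℝ := ∫ u in Ioi s, exp (-a * u ^ 2 / 2)

section GaussTail

variable {a : ℝ}

lemma integrable_exp_neg_mul_sq_div_two (ha : 0 < a) :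
    Integrable fun u : ℝ => exp (-a * u ^ 2 / 2) := by
  convert integrable_exp_neg_mul_sq (half_pos ha) using 2 with u
  ring_nf

lemma integrable_mul_exp_neg_mul_sq_div_two (ha : 0 < a) :
    Integrable fun u : ℝ => u * exp (-a * u ^ 2 / 2) := by
  convert integrable_mul_exp_neg_mul_sq (half_pos ha) using 2 with u
  ring_nf

lemma integral_Ioi_mul_exp_neg_mul_sq_div_two (ha : 0 < a) (s : ℝ) :
    ∫ u in Ioi s, u * exp (-a * u ^ 2 / 2) = exp (-a * s ^ 2 / 2) / a := by
  have hderiv : ∀ x ∈ Ici s, HasDerivAt (fun u => -exp (-a * u ^ 2 / 2) / a)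
      (x * exp (-a * x ^ 2 / 2)) x := fun x _ => by
    refine ((((hasDerivAt_pow 2 x).const_mul (-a)).div_const 2).exp.neg.div_const a).congr_deriv
      ?_
    field_simp
    ring
  have hexponent : Tendsto (fun u : ℝ => -a * u ^ 2 / 2) atTop atBot :=
    (tendsto_neg_atTop_atBot.comp
      ((tendsto_pow_atTop two_ne_zero).const_mul_atTop (half_pos ha))).congr
      fun u => by simp only [Function.comp_apply]; ring
  have hlim : Tendsto (fun u => -exp (-a * u ^ 2 / 2) / a) atTop (𝓝 0) := by
    simpa using ((tendsto_exp_atBot.comp hexponent).neg).div_const a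
  rw [integral_Ioi_of_hasDerivAt_of_tendsto' hderiv
    (integrable_mul_exp_neg_mul_sq_div_two ha).integrableOn hlim]
  ring

lemma gaussTail_antitone (ha : 0 < a) : Antitone (gaussTail a) := fun _ _ hst =>
  setIntegral_mono_set (integrable_exp_neg_mul_sq_div_two ha).integrableOn
    (Eventually.of_forall fun _ => (exp_pos _).le) (Ioi_subset_Ioi hst).eventuallyLE

lemma exp_neg_mul_sq_div_two_le (ha : 0 ≤ a) {s u : ℝ} (hs : 0 ≤ s) (hsu : s ≤ u) :
    exp (-a * u ^ 2 / 2) ≤ exp (-a * s ^ 2 / 2) * exp (-a * (u - s) ^ 2 / 2) := by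
  rw [← exp_add, exp_le_exp]
  nlinarith [mul_nonneg ha (mul_nonneg hs (sub_nonneg.2 hsu))]

lemma gaussTail_le_integral_mul (ha : 0 < a) {s : ℝ} (hs : 0 ≤ s) :
    gaussTail a s ≤ (∫ u, exp (-a * u ^ 2 / 2)) * exp (-a * s ^ 2 / 2) := by
  have hshift : Integrable fun u => exp (-a * s ^ 2 / 2) * exp (-a * (u - s) ^ 2 / 2) :=
    ((integrable_exp_neg_mul_sq_div_two ha).comp_sub_right s).const_mul _
  calc gaussTail a s
      ≤ ∫ u in Ioi s, exp (-a * s ^ 2 / 2) * exp (-a * (u - s) ^ 2 / 2) :=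
        setIntegral_mono_on (integrable_exp_neg_mul_sq_div_two ha).integrableOn
          hshift.integrableOn measurableSet_Ioi fun u hu =>
          exp_neg_mul_sq_div_two_le ha.le hs (le_of_lt hu)
    _ ≤ ∫ u, exp (-a * s ^ 2 / 2) * exp (-a * (u - s) ^ 2 / 2) :=
        setIntegral_le_integral hshift (Eventually.of_forall fun _ => by positivity)
    _ = _ := by
        rw [integral_const_mul, integral_sub_right_eq_self (fun u => exp (-a * u ^ 2 / 2)),
          mul_comm]

lemma mul_gaussTail_le (ha : 0 < a) (s : ℝ) :
    s * gaussTail a s ≤ exp (-a * s ^ 2 / 2) / a := by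
  rw [← integral_Ioi_mul_exp_neg_mul_sq_div_two ha, gaussTail, ← integral_const_mul]
  exact setIntegral_mono_on ((integrable_exp_neg_mul_sq_div_two ha).const_mul s).integrableOn
    (integrable_mul_exp_neg_mul_sq_div_two ha).integrableOn measurableSet_Ioi fun u hu =>
    mul_le_mul_of_nonneg_right (le_of_lt hu) (exp_pos _).le

lemma gaussTail_le (ha : 0 < a) {s : ℝ} (hs : 0 ≤ s) :
    gaussTail a s ≤
      ((∫ u, exp (-a * u ^ 2 / 2)) + 1 / a) * (exp (-a * s ^ 2 / 2) / (1 + s)) := by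
  rw [mul_div_assoc', le_div_iff₀ (by positivity)]
  linear_combination gaussTail_le_integral_mul ha hs + mul_gaussTail_le ha s

lemma exp_mul_le_gaussTail (ha : 0 < a) {s : ℝ} (hs : 0 ≤ s) :
    exp (-(3 * a) / 2) * (exp (-a * s ^ 2 / 2) / (1 + s)) ≤ gaussTail a s := by
  set δ := 1 / (1 + s) with hδ
  have hδ0 : 0 < δ := by positivity
  have hδ1 : δ ≤ 1 := by rw [hδ, div_le_one (by positivity)]; linarith
  have hsδ : s * δ ≤ 1 := by rw [hδ, mul_one_div, div_le_one (by positivity)]; linarith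
  calc exp (-(3 * a) / 2) * (exp (-a * s ^ 2 / 2) / (1 + s))
      = δ * exp (-(3 * a) / 2 + -a * s ^ 2 / 2) := by rw [exp_add, hδ]; ring
    _ ≤ δ * exp (-a * (s + δ) ^ 2 / 2) := by
        gcongr
        nlinarith [mul_le_mul_of_nonneg_left hδ1 hδ0.le]
    _ = ∫ _ in s..s + δ, exp (-a * (s + δ) ^ 2 / 2) := by simp
    _ ≤ ∫ u in s..s + δ, exp (-a * u ^ 2 / 2) := by
        refine intervalIntegral.integral_mono_on (by linarith) intervalIntegrable_const
          (integrable_exp_neg_mul_sq_div_two ha).intervalIntegrable fun u hu => ?_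
        rw [exp_le_exp]
        have : u ^ 2 ≤ (s + δ) ^ 2 := pow_le_pow_left₀ (hs.trans hu.1) hu.2 2
        nlinarith
    _ ≤ gaussTail a s := by
        rw [intervalIntegral.integral_of_le (by linarith)]
        exact setIntegral_mono_set (integrable_exp_neg_mul_sq_div_two ha).integrableOn
          (Eventually.of_forall fun _ => (exp_pos _).le) Ioc_subset_Ioi_self.eventuallyLE

end GaussTail

lemma exp_sq_eq_exp_mul_exp (c ε s : ℝ) :
    exp (ε * s ^ 2 / 2) = exp (c * s ^ 2 / 2) * exp (-(c - ε) * s ^ 2 / 2) := by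
  rw [← exp_add]
  ring_nf

lemma intervalIntegrable_exp_sq_div_one_add (ε : ℝ) {r : ℝ} (hr : 0 ≤ r) :
    IntervalIntegrable (fun s => exp (ε * s ^ 2 / 2) / (1 + s)) volume 0 r := by
  refine ContinuousOn.intervalIntegrable fun s hs => ?_
  rw [uIcc_of_le hr] at hs
  have : (0 : ℝ) < 1 + s := by linarith [hs.1]
  exact (ContinuousAt.div (by fun_prop) (by fun_prop) this.ne').continuousWithinAt

section Psi1

variable {c ε r : ℝ}

lemma intervalIntegrable_exp_sq_mul_gaussTail (hεc : ε < c) :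
    IntervalIntegrable (fun s => exp (c * s ^ 2 / 2) * gaussTail (c - ε) s) volume 0 r :=
  (gaussTail_antitone (sub_pos.2 hεc)).intervalIntegrable.continuousOn_mul (by fun_prop)

lemma exp_mul_integral_le_psi1 (hεc : ε < c) (hr : 0 ≤ r) :
    exp (-(3 * (c - ε)) / 2) * ∫ s in 0..r, exp (ε * s ^ 2 / 2) / (1 + s) ≤ psi1 c ε r := by
  rw [← intervalIntegral.integral_const_mul]
  refine intervalIntegral.integral_mono_on hr
    ((intervalIntegrable_exp_sq_div_one_add ε hr).const_mul _)
    (intervalIntegrable_exp_sq_mul_gaussTail hεc) fun s hs => ?_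
  calc exp (-(3 * (c - ε)) / 2) * (exp (ε * s ^ 2 / 2) / (1 + s))
      = exp (c * s ^ 2 / 2) *
          (exp (-(3 * (c - ε)) / 2) * (exp (-(c - ε) * s ^ 2 / 2) / (1 + s))) := by
        rw [exp_sq_eq_exp_mul_exp c ε s]
        ring
    _ ≤ exp (c * s ^ 2 / 2) * gaussTail (c - ε) s := by
        gcongr
        exact exp_mul_le_gaussTail (sub_pos.2 hεc) hs.1

lemma psi1_le_mul_integral (hεc : ε < c) (hr : 0 ≤ r) :
    psi1 c ε r ≤ ((∫ u, exp (-(c - ε) * u ^ 2 / 2)) + 1 / (c - ε)) *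
      ∫ s in 0..r, exp (ε * s ^ 2 / 2) / (1 + s) := by
  rw [← intervalIntegral.integral_const_mul]
  refine intervalIntegral.integral_mono_on hr (intervalIntegrable_exp_sq_mul_gaussTail hεc)
    ((intervalIntegrable_exp_sq_div_one_add ε hr).const_mul _) fun s hs => ?_
  calc exp (c * s ^ 2 / 2) * gaussTail (c - ε) s
      ≤ exp (c * s ^ 2 / 2) * (((∫ u, exp (-(c - ε) * u ^ 2 / 2)) + 1 / (c - ε)) *
          (exp (-(c - ε) * s ^ 2 / 2) / (1 + s))) := by
        gcongr
        exact gaussTail_le (sub_pos.2 hεc) hs.1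
    _ = _ := by
        rw [exp_sq_eq_exp_mul_exp c ε s]
        ring

end Psi1

lemma integral_mul_exp_sq_div_two (ε r : ℝ) :
    ∫ s in 0..r, ε * s * exp (ε * s ^ 2 / 2) = exp (ε * r ^ 2 / 2) - 1 := by
  have hderiv : ∀ x ∈ uIcc 0 r, HasDerivAt (fun s => exp (ε * s ^ 2 / 2))
      (ε * x * exp (ε * x ^ 2 / 2)) x := fun x _ => by
    refine (((hasDerivAt_pow 2 x).const_mul ε).div_const 2).exp.congr_deriv ?_
    ring
  rw [intervalIntegral.integral_eq_sub_of_hasDerivAt hderiv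
    (Continuous.intervalIntegrable (by fun_prop) _ _)]
  simp

section Psi2

variable {ε r : ℝ}

lemma psi2_le_mul_integral (hε : 0 ≤ ε) (hr : 0 < r) :
    psi2 ε r ≤ ε * ∫ s in 0..r, exp (ε * s ^ 2 / 2) / (1 + s) := by
  rw [psi2, ← integral_mul_exp_sq_div_two, ← intervalIntegral.integral_div,
    ← intervalIntegral.integral_const_mul]
  refine intervalIntegral.integral_mono_on hr.le
    ((Continuous.intervalIntegrable (by fun_prop) _ _).div_const _)
    ((intervalIntegrable_exp_sq_div_one_add ε hr.le).const_mul _) fun s hs => ?_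
  have hs1 : 0 < 1 + s := by linarith [hs.1]
  rw [div_le_iff₀ (by positivity), mul_div_assoc', div_mul_eq_mul_div, le_div_iff₀ hs1]
  have : s * (1 + s) ≤ r * (1 + r) := by nlinarith [hs.1, hs.2]
  nlinarith [mul_le_mul_of_nonneg_left this (mul_nonneg hε (exp_pos (ε * s ^ 2 / 2)).le)]

lemma mul_exp_le_psi2 (hε : 0 < ε) (hr : 0 < r) :
    r * exp (ε * r ^ 2 / 8) ≤ (4 / ε + 64 / (9 * ε ^ 2)) * psi2 ε r := by
  set y := 3 * ε * r ^ 2 / 8 with hy_def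
  have hy : 0 ≤ y := by positivity
  have hsplit : exp (ε * r ^ 2 / 8) * (exp y - 1) ≤ exp (ε * r ^ 2 / 2) - 1 := by
    have : exp (ε * r ^ 2 / 2) = exp (ε * r ^ 2 / 8) * exp y := by
      rw [← exp_add, hy_def]
      ring_nf
    rw [this]
    nlinarith [one_le_exp (show 0 ≤ ε * r ^ 2 / 8 by positivity)]
  have hquad : y + y ^ 2 / 2 ≤ exp y - 1 := by linarith [quadratic_le_exp_of_nonneg hy]
  have hpoly : r ^ 2 * (1 + r) ≤ (4 / ε + 64 / (9 * ε ^ 2)) * (y + y ^ 2 / 2) := by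
    have hexpand : (4 / ε + 64 / (9 * ε ^ 2)) * (y + y ^ 2 / 2) =
        3 / 2 * r ^ 2 + r ^ 4 / 2 + (9 * ε / 32 * r ^ 4 + 8 / (3 * ε) * r ^ 2) := by
      rw [hy_def]
      field_simp
      ring
    rw [hexpand]
    nlinarith [sq_nonneg (r * (r - 1)), show 0 ≤ 9 * ε / 32 * r ^ 4 + 8 / (3 * ε) * r ^ 2 by
      positivity]
  rw [psi2, mul_div_assoc', le_div_iff₀ (by positivity)]
  calc r * exp (ε * r ^ 2 / 8) * (r * (1 + r))
      = exp (ε * r ^ 2 / 8) * (r ^ 2 * (1 + r)) := by ring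
    _ ≤ exp (ε * r ^ 2 / 8) * ((4 / ε + 64 / (9 * ε ^ 2)) * (exp y - 1)) :=
        mul_le_mul_of_nonneg_left
          (hpoly.trans (mul_le_mul_of_nonneg_left hquad (by positivity))) (exp_pos _).le
    _ ≤ (4 / ε + 64 / (9 * ε ^ 2)) * (exp (ε * r ^ 2 / 2) - 1) := by
        rw [mul_left_comm]
        gcongr

lemma exp_sq_div_one_add_le (hε : 0 < ε) (hr : 0 < r) {s : ℝ} (hs : s ∈ Icc 0 r) :
    exp (ε * s ^ 2 / 2) / (1 + s) ≤
      exp (ε * r ^ 2 / 8) + 4 / (ε * r * (1 + r)) * (ε * s * exp (ε * s ^ 2 / 2)) := by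
  have hs1 : 0 < 1 + s := by linarith [hs.1]
  rcases le_total s (r / 2) with hsr | hsr
  · have hhead : exp (ε * s ^ 2 / 2) / (1 + s) ≤ exp (ε * r ^ 2 / 8) := by
      refine (div_le_self (exp_pos _).le (by linarith [hs.1])).trans (exp_le_exp.2 ?_)
      nlinarith [mul_le_mul hsr hsr hs.1 (by linarith [hs.1])]
    have hs0 := hs.1
    exact hhead.trans (le_add_of_nonneg_right (by positivity))
  · have hkey : 1 / (1 + s) ≤ 4 / (ε * r * (1 + r)) * (ε * s) := by
      rw [div_mul_eq_mul_div, div_le_div_iff₀ hs1 (by positivity)]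
      nlinarith [mul_le_mul (show r ≤ 2 * s by linarith) (show 1 + r ≤ 2 * (1 + s) by linarith)
        (by linarith) (by linarith)]
    calc exp (ε * s ^ 2 / 2) / (1 + s)
        = exp (ε * s ^ 2 / 2) * (1 / (1 + s)) := (mul_one_div _ _).symm
      _ ≤ exp (ε * s ^ 2 / 2) * (4 / (ε * r * (1 + r)) * (ε * s)) :=
          mul_le_mul_of_nonneg_left hkey (exp_pos _).le
      _ = 4 / (ε * r * (1 + r)) * (ε * s * exp (ε * s ^ 2 / 2)) := by ring
      _ ≤ _ := le_add_of_nonneg_left (exp_pos _).le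

lemma integral_le_psi2 (hε : 0 < ε) (hr : 0 < r) :
    ∫ s in 0..r, exp (ε * s ^ 2 / 2) / (1 + s) ≤ (8 / ε + 64 / (9 * ε ^ 2)) * psi2 ε r := by
  calc ∫ s in 0..r, exp (ε * s ^ 2 / 2) / (1 + s)
      ≤ ∫ s in 0..r,
          exp (ε * r ^ 2 / 8) + 4 / (ε * r * (1 + r)) * (ε * s * exp (ε * s ^ 2 / 2)) :=
        intervalIntegral.integral_mono_on hr.le (intervalIntegrable_exp_sq_div_one_add ε hr.le)
          (Continuous.intervalIntegrable (by fun_prop) _ _) fun s hs =>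
          exp_sq_div_one_add_le hε hr hs
    _ = r * exp (ε * r ^ 2 / 8) + 4 / ε * psi2 ε r := by
        rw [intervalIntegral.integral_add intervalIntegrable_const
          (Continuous.intervalIntegrable (by fun_prop) _ _), intervalIntegral.integral_const,
          intervalIntegral.integral_const_mul, integral_mul_exp_sq_div_two, psi2]
        field_simp
        ring
    _ ≤ (4 / ε + 64 / (9 * ε ^ 2)) * psi2 ε r + 4 / ε * psi2 ε r :=
        add_le_add_left (mul_exp_le_psi2 hε hr) _
    _ = _ := by ring

end Psi2

theorem stmt_0 (c ε : ℝ) (hε : 0 < ε) (hεc : ε < c) :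
    ∃ Chat C0 : ℝ, 0 < Chat ∧ 0 < C0 ∧
      ∀ r : ℝ, 0 < r → Chat * psi2 ε r ≤ psi1 c ε r ∧ psi1 c ε r ≤ C0 * psi2 ε r := by
  have hK : 0 < (∫ u, exp (-(c - ε) * u ^ 2 / 2)) + 1 / (c - ε) := by
    have : 0 ≤ ∫ u, exp (-(c - ε) * u ^ 2 / 2) := integral_nonneg fun _ => (exp_pos _).le
    positivity
  refine ⟨exp (-(3 * (c - ε)) / 2) / ε,
    ((∫ u, exp (-(c - ε) * u ^ 2 / 2)) + 1 / (c - ε)) * (8 / ε + 64 / (9 * ε ^ 2)),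
    by positivity, by positivity, fun r hr => ⟨?_, ?_⟩⟩
  · calc exp (-(3 * (c - ε)) / 2) / ε * psi2 ε r
        = exp (-(3 * (c - ε)) / 2) * (psi2 ε r / ε) := by ring
      _ ≤ exp (-(3 * (c - ε)) / 2) * ∫ s in 0..r, exp (ε * s ^ 2 / 2) / (1 + s) := by
        gcongr
        rw [div_le_iff₀' hε]
        exact psi2_le_mul_integral hε.le hr
      _ ≤ psi1 c ε r := exp_mul_integral_le_psi1 hεc hr.le
  · calc psi1 c ε r
        ≤ ((∫ u, exp (-(c - ε) * u ^ 2 / 2)) + 1 / (c - ε)) *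
            ∫ s in 0..r, exp (ε * s ^ 2 / 2) / (1 + s) := psi1_le_mul_integral hεc hr.le
      _ ≤ ((∫ u, exp (-(c - ε) * u ^ 2 / 2)) + 1 / (c - ε)) *
            ((8 / ε + 64 / (9 * ε ^ 2)) * psi2 ε r) := by
        gcongr
        exact integral_le_psi2 hε hr
      _ = _ := by ring
end

section
/- The limit as r → 0⁺ of ψ₁(r)/ψ₂(r) equals (2/ε)·√(π/(2(c-ε))). -/
open MeasureTheory Real Filter

theorem stmt_1 (c ε : ℝ) (hε : 0 < ε) (hεc : ε < c) :
    Tendsto (fun r : ℝ => psi1 c ε r / psi2 ε r) (nhdsWithin 0 (Set.Ioi 0))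
      (nhds ((2 / ε) * Real.sqrt (Real.pi / (2 * (c - ε))))) := by
  have hca : (0:ℝ) < (c - ε) / 2 := by linarith
  set h : ℝ → ℝ := fun u => Real.exp (-(c - ε) * u ^ 2 / 2) with hh
  have hfun : h = fun u => Real.exp (-((c - ε) / 2) * u ^ 2) := by
    funext u; simp only [hh]; congr 1; ring
  have hInt : Integrable h := by rw [hfun]; exact integrable_exp_neg_mul_sq hca
  have hcont_h : Continuous h := by continuity
  set g : ℝ → ℝ := fun s => ∫ u in Set.Ioi s, h u with hg
  -- g s = g 0 - ∫ 0..s h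
  have hg_eq : ∀ s : ℝ, g s = g 0 - ∫ t in (0:ℝ)..s, h t := by
    intro s
    have h1 : (∫ u in Set.Iic s, h u) + g s = ∫ u, h u :=
      intervalIntegral.integral_Iic_add_Ioi hInt.integrableOn hInt.integrableOn
    have h2 : (∫ u in Set.Iic (0:ℝ), h u) + g 0 = ∫ u, h u :=
      intervalIntegral.integral_Iic_add_Ioi hInt.integrableOn hInt.integrableOn
    have h3 : (∫ u in Set.Iic s, h u) - (∫ u in Set.Iic (0:ℝ), h u) =
        ∫ t in (0:ℝ)..s, h t :=
      intervalIntegral.integral_Iic_sub_Iic hInt.integrableOn hInt.integrableOn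
    rw [← h3]; linarith
  have hcont_g : Continuous g := by
    have : Continuous fun s : ℝ => ∫ t in (0:ℝ)..s, h t :=
      intervalIntegral.continuous_primitive (fun a b => hInt.intervalIntegrable) 0
    exact (continuous_const.sub this).congr fun s => (hg_eq s).symm
  set f : ℝ → ℝ := fun s => Real.exp (c * s ^ 2 / 2) * g s with hf
  have hcont_f : Continuous f :=
    (Real.continuous_exp.comp (by fun_prop)).mul hcont_g
  -- derivative of psi1 at 0
  have hD : HasDerivAt (fun r => psi1 c ε r) (g 0) 0 := by
    have := intervalIntegral.integral_hasDerivAt_right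
      (hcont_f.intervalIntegrable 0 0)
      (hcont_f.stronglyMeasurableAtFilter _ _)
      hcont_f.continuousAt
    have hf0 : f 0 = g 0 := by simp [hf]
    rw [← hf0]
    exact this
  have hT1 : Tendsto (fun r : ℝ => psi1 c ε r / r) (nhdsWithin 0 (Set.Ioi 0)) (nhds (g 0)) := by
    have := hasDerivAt_iff_tendsto_slope.mp hD
    have h2 := this.mono_left (nhdsWithin_mono _ (fun x hx => ne_of_gt hx))
    refine h2.congr' ?_
    filter_upwards [self_mem_nhdsWithin] with r hr
    have : psi1 c ε 0 = 0 := by simp [psi1]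
    simp [slope, this, div_eq_inv_mul]
  -- second factor
  have hq : Tendsto (fun r : ℝ => ε * r ^ 2 / 2) (nhdsWithin 0 (Set.Ioi 0))
      (nhdsWithin 0 {x : ℝ | x ≠ 0}) := by
    apply tendsto_nhdsWithin_of_tendsto_nhds_of_eventually_within
    · have hc : Continuous (fun r : ℝ => ε * r ^ 2 / 2) :=
        (continuous_const.mul (continuous_pow 2)).div_const 2
      simpa using (hc.tendsto 0).mono_left nhdsWithin_le_nhds
    · filter_upwards [self_mem_nhdsWithin] with r hr
      exact ne_of_gt (div_pos (mul_pos hε (pow_pos hr 2)) two_pos)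
  have hslope : Tendsto (fun y : ℝ => (Real.exp y - 1) / y) (nhdsWithin 0 {x : ℝ | x ≠ 0})
      (nhds 1) := by
    have := hasDerivAt_iff_tendsto_slope.mp (Real.hasDerivAt_exp 0)
    rw [Real.exp_zero] at this
    refine this.congr' ?_
    filter_upwards [self_mem_nhdsWithin] with y hy
    simp [slope, Real.exp_zero, div_eq_inv_mul]
  have hslope2 : Tendsto (fun r : ℝ => (ε * r ^ 2 / 2) / (Real.exp (ε * r ^ 2 / 2) - 1))
      (nhdsWithin 0 (Set.Ioi 0)) (nhds 1) := by
    have hcomp := (hslope.comp hq).inv₀ (by norm_num)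
    norm_num at hcomp
    refine hcomp.congr fun r => ?_
    simp [Function.comp, inv_div]
  have hT2 : Tendsto (fun r : ℝ => r / psi2 ε r) (nhdsWithin 0 (Set.Ioi 0)) (nhds (2 / ε)) := by
    have hbase : Tendsto (fun r : ℝ => (1 + r) * ((2 / ε) * ((ε * r ^ 2 / 2) / (Real.exp (ε * r ^ 2 / 2) - 1))))
        (nhdsWithin 0 (Set.Ioi 0)) (nhds ((1 + 0) * ((2 / ε) * 1))) := by
      exact (((continuous_const.add continuous_id).tendsto 0).mono_left
        nhdsWithin_le_nhds).mul (tendsto_const_nhds.mul hslope2)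
    have : ((1:ℝ) + 0) * ((2 / ε) * 1) = 2 / ε := by ring
    rw [this] at hbase
    refine hbase.congr' ?_
    filter_upwards [self_mem_nhdsWithin] with r hr
    have hr0 : (0:ℝ) < r := hr
    have hA : Real.exp (ε * r ^ 2 / 2) - 1 ≠ 0 := by
      have : (1:ℝ) < Real.exp (ε * r ^ 2 / 2) := by
        rw [← Real.exp_zero]
        exact Real.exp_lt_exp.mpr (by positivity)
      linarith
    rw [psi2]
    rw [div_div_eq_mul_div]
    field_simp
  -- combine
  have hmul := hT1.mul hT2
  have hval : g 0 = Real.sqrt (Real.pi / (2 * (c - ε))) := by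
    have h1 : g 0 = ∫ u in Set.Ioi (0:ℝ), Real.exp (-((c - ε) / 2) * u ^ 2) := by
      simp only [hg, hfun]
    rw [h1, integral_gaussian_Ioi]
    rw [show Real.pi / ((c - ε) / 2) = 4 * (Real.pi / (2 * (c - ε))) by
      have hne : c - ε ≠ 0 := ne_of_gt (by linarith)
      field_simp
      ring]
    rw [Real.sqrt_mul (by norm_num)]
    rw [show Real.sqrt 4 = 2 by
      rw [show (4:ℝ) = 2 ^ 2 by norm_num, Real.sqrt_sq (by norm_num)]]
    ring
  rw [hval] at hmul
  rw [mul_comm] at hmul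
  refine hmul.congr' ?_
  filter_upwards [self_mem_nhdsWithin] with r hr
  have hr0 : r ≠ 0 := ne_of_gt hr
  rw [div_mul_div_comm, mul_comm (psi1 c ε r) r, mul_div_mul_left _ _ hr0]
end

section
/- For all r ≥ 0 one has ψ₁(r) ≤ (2/√(c-ε)) · ∫₀^r e^{ε s²/2} / (√(2+(c-ε)s²) + √(c-ε)·s) ds. -/
/-! For `a > 0` and `x ≥ 0` the Gaussian tail obeys the Komatsu-type bound
`∫_x^∞ e^{-a u²/2} du ≤ 2 e^{-a x²/2} / (√a (√(2 + a x²) + √a x))`: the right-hand side tends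
to `0` at infinity and its derivative is at most `-e^{-a x²/2}` on `[0, ∞)`. With `a = c - ε`,
multiplying by `e^{c s²/2}` turns this bound into the integrand on the right, and integrating
over `[0, r]` gives the claim. -/

open MeasureTheory Real

open Filter Set Topology

theorem setIntegral_Ioi_le_of_hasDerivAt {f g g' : ℝ → ℝ} {x : ℝ}
    (hderiv : ∀ t ∈ Ici x, HasDerivAt g (g' t) t) (hg : Tendsto g atTop (𝓝 0))
    (hf : ∀ t ∈ Ioi x, 0 ≤ f t) (hfg : ∀ t ∈ Ioi x, f t ≤ -g' t) :
    ∫ t in Ioi x, f t ≤ g x := by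
  have hg' : ∀ t ∈ Ioi x, g' t ≤ 0 := fun t ht => by linarith [hf t ht, hfg t ht]
  calc ∫ t in Ioi x, f t ≤ ∫ t in Ioi x, -g' t :=
        integral_mono_of_nonneg ((ae_restrict_iff' measurableSet_Ioi).2 (ae_of_all _ hf))
          (integrableOn_Ioi_deriv_of_nonpos' hderiv hg' hg).neg
          ((ae_restrict_iff' measurableSet_Ioi).2 (ae_of_all _ hfg))
    _ = g x := by rw [integral_neg, integral_Ioi_of_hasDerivAt_of_nonpos' hderiv hg' hg]; ring

section GaussianTail

variable {a t : ℝ}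

lemma sqrt_two_add_mul_sq_add_pos (ha : 0 < a) (ht : 0 ≤ t) : 0 < √(2 + a * t ^ 2) + √a * t := by
  have := sqrt_pos.2 (show 0 < 2 + a * t ^ 2 by positivity)
  positivity

noncomputable def gaussianTailBound (a t : ℝ) : ℝ :=
  2 / √a * (exp (-a * t ^ 2 / 2) / (√(2 + a * t ^ 2) + √a * t))

lemma hasDerivAt_gaussianTailBound (ha : 0 < a) (ht : 0 ≤ t) :
    HasDerivAt (gaussianTailBound a)
      (-(2 / √a * (exp (-a * t ^ 2 / 2) *
        (a * t * (√(2 + a * t ^ 2) + √a * t) + a * t / √(2 + a * t ^ 2) + √a) /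
          (√(2 + a * t ^ 2) + √a * t) ^ 2))) t := by
  have hS : HasDerivAt (fun t => √(2 + a * t ^ 2)) (a * t / √(2 + a * t ^ 2)) t := by
    convert ((hasDerivAt_pow 2 t).const_mul a |>.const_add 2).sqrt (by positivity) using 1
    field_simp
    ring
  have hE : HasDerivAt (fun t => exp (-a * t ^ 2 / 2)) (exp (-a * t ^ 2 / 2) * (-a * t)) t := by
    convert ((hasDerivAt_pow 2 t).const_mul (-a) |>.div_const 2).exp using 1
    ring
  refine ((hE.div (hS.add ((hasDerivAt_id t).const_mul √a))
    (sqrt_two_add_mul_sq_add_pos ha ht).ne').const_mul (2 / √a)).congr_deriv ?_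
  simp only [Pi.add_apply, id, mul_one]
  ring

lemma exp_le_neg_deriv_gaussianTailBound (ha : 0 < a) (ht : 0 ≤ t) :
    exp (-a * t ^ 2 / 2) ≤ -deriv (gaussianTailBound a) t := by
  rw [(hasDerivAt_gaussianTailBound ha ht).deriv, neg_neg]
  have hS2 : √(2 + a * t ^ 2) ^ 2 = 2 + a * t ^ 2 := sq_sqrt (by positivity)
  have hT2 : √a ^ 2 = a := sq_sqrt ha.le
  have hT := sqrt_pos.2 ha
  have hD := sqrt_two_add_mul_sq_add_pos ha ht
  -- With `D = √(2 + a t²) + √a t` one has `√a D² = 2 (a t D + √a)`, so the slack in the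
  -- inequality is exactly the term `a t / √(2 + a t²)`.
  have hD2 : √a * (√(2 + a * t ^ 2) + √a * t) ^ 2 =
      2 * (a * t * (√(2 + a * t ^ 2) + √a * t) + √a) := by
    linear_combination √a * hS2 + (2 * t * √(2 + a * t ^ 2) + √a * t ^ 2) * hT2
  calc exp (-a * t ^ 2 / 2)
      = 2 / √a * (exp (-a * t ^ 2 / 2) * (a * t * (√(2 + a * t ^ 2) + √a * t) + √a) /
          (√(2 + a * t ^ 2) + √a * t) ^ 2) := by
        field_simp
        linear_combination hD2
    _ ≤ _ := by
        gcongr 2 / √a * (_ * ?_ / _)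
        have : 0 ≤ a * t / √(2 + a * t ^ 2) := by positivity
        linarith

lemma tendsto_gaussianTailBound (ha : 0 < a) : Tendsto (gaussianTailBound a) atTop (𝓝 0) := by
  have hE : Tendsto (fun t => exp (-a * t ^ 2 / 2)) atTop (𝓝 0) :=
    tendsto_exp_atBot.comp <|
      ((tendsto_pow_atTop two_ne_zero).const_mul_atTop_of_neg (neg_neg_of_pos ha)).atBot_div_const
        two_pos
  have hD : Tendsto (fun t => (√(2 + a * t ^ 2) + √a * t)⁻¹) atTop (𝓝 0) := by
    refine Tendsto.inv_tendsto_atTop <|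
      tendsto_atTop_mono (fun t => ?_) (tendsto_id.const_mul_atTop (sqrt_pos.2 ha))
    simp
  have := (hE.mul hD).const_mul (2 / √a)
  rw [mul_zero, mul_zero] at this
  exact this.congr fun t => by rw [gaussianTailBound, ← div_eq_mul_inv]

theorem integral_Ioi_exp_neg_mul_sq_div_two_le (ha : 0 < a) {x : ℝ} (hx : 0 ≤ x) :
    ∫ u in Ioi x, exp (-a * u ^ 2 / 2) ≤ gaussianTailBound a x :=
  setIntegral_Ioi_le_of_hasDerivAt
    (fun _ ht => (hasDerivAt_gaussianTailBound ha (hx.trans ht)).differentiableAt.hasDerivAt)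
    (tendsto_gaussianTailBound ha) (fun _ _ => (exp_pos _).le)
    (fun _ ht => exp_le_neg_deriv_gaussianTailBound ha (hx.trans ht.le))

end GaussianTail

theorem stmt_4_general (c ε : ℝ) (hεc : ε < c) :
    ∀ r : ℝ, 0 ≤ r →
      psi1 c ε r ≤ (2 / Real.sqrt (c - ε)) *
        ∫ s in (0:ℝ)..r,
          Real.exp (ε * s ^ 2 / 2) / (Real.sqrt (2 + (c - ε) * s ^ 2) + Real.sqrt (c - ε) * s) := by
  intro r hr
  have ha : 0 < c - ε := sub_pos.2 hεc
  have hpt : ∀ s ∈ Ioc 0 r, exp (c * s ^ 2 / 2) * ∫ u in Ioi s, exp (-(c - ε) * u ^ 2 / 2) ≤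
      2 / √(c - ε) * (exp (ε * s ^ 2 / 2) / (√(2 + (c - ε) * s ^ 2) + √(c - ε) * s)) := by
    intro s hs
    calc _ ≤ exp (c * s ^ 2 / 2) * gaussianTailBound (c - ε) s :=
          mul_le_mul_of_nonneg_left (integral_Ioi_exp_neg_mul_sq_div_two_le ha hs.1.le)
            (exp_pos _).le
      _ = _ := by
          rw [gaussianTailBound, show ε * s ^ 2 / 2 = c * s ^ 2 / 2 + -(c - ε) * s ^ 2 / 2 by ring,
            exp_add]
          ring
  have hcont : ContinuousOn (fun s => 2 / √(c - ε) *
      (exp (ε * s ^ 2 / 2) / (√(2 + (c - ε) * s ^ 2) + √(c - ε) * s))) (Icc 0 r) :=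
    continuousOn_const.mul (ContinuousOn.div (by fun_prop) (by fun_prop)
      fun s hs => (sqrt_two_add_mul_sq_add_pos ha hs.1).ne')
  rw [psi1, ← intervalIntegral.integral_const_mul, intervalIntegral.integral_of_le hr,
    intervalIntegral.integral_of_le hr]
  refine integral_mono_of_nonneg ?_ (hcont.integrableOn_Icc.mono_set Ioc_subset_Icc_self)
    ((ae_restrict_iff' measurableSet_Ioc).2 (ae_of_all _ hpt))
  exact ae_of_all _ fun s => mul_nonneg (exp_pos _).le
    (setIntegral_nonneg measurableSet_Ioi fun u _ => (exp_pos _).le)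

theorem stmt_4 (c ε : ℝ) (hε : 0 < ε) (hεc : ε < c) :
    ∀ r : ℝ, 0 ≤ r →
      psi1 c ε r ≤ (2 / Real.sqrt (c - ε)) *
        ∫ s in (0:ℝ)..r,
          Real.exp (ε * s ^ 2 / 2) / (Real.sqrt (2 + (c - ε) * s ^ 2) + Real.sqrt (c - ε) * s) :=
  stmt_4_general c ε hεc
end

section
/- Let δ ∈ [1,2), d ≥ 1, and define V : ℝ^d → ℝ by V(x) = -(1+‖x‖²)^{δ/2}. Then for every x ∈ ℝ^d and every z ∈ ℝ^d, the second derivative of V at x evaluated at the pair (z,z) satisfies D²V(x)[z,z] ≤ -δ(1+‖x‖²)^{δ/2-2}‖z‖²; in particular D²V(x)[z,z] < 0 whenever z ≠ 0, so V is strictly concave. -/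
/-!
Write `A = 1 + ‖x‖²`. The Hessian of `A ^ (δ / 2)` in direction `z` is
`δ A^(δ/2-1) ‖z‖² + δ (δ - 2) A^(δ/2-2) ⟪x, z⟫²`, and Cauchy–Schwarz together with `δ ≥ 1` bounds
it below by `δ A^(δ/2-2) ‖z‖²`.

Strict concavity does not go through the Hessian: `√A` is the Euclidean norm of `(1, x)`, which is
strictly convex in `x` because `(1, x)` and `(1, y)` never lie on a common ray unless `x = y`; and
`t ↦ t ^ δ` is convex and strictly increasing on `[0, ∞)`.
-/

open Real RealInnerProductSpace Set

variable {E : Type*} [NormedAddCommGroup E] [InnerProductSpace ℝ E]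

omit [InnerProductSpace ℝ E] in
lemma sqrt_one_add_norm_sq_eq_norm_toLp (x : E) :
    √(1 + ‖x‖ ^ 2) = ‖WithLp.toLp 2 ((1 : ℝ), x)‖ := by
  simp [WithLp.prod_norm_eq_of_L2]

lemma strictConvexOn_sqrt_one_add_norm_sq :
    StrictConvexOn ℝ univ (fun x : E => √(1 + ‖x‖ ^ 2)) := by
  refine ⟨convex_univ, fun x _ y _ hxy a b ha hb hab => ?_⟩
  set u := WithLp.toLp 2 ((1 : ℝ), x)
  set v := WithLp.toLp 2 ((1 : ℝ), y)
  have hcomb : WithLp.toLp 2 ((1 : ℝ), a • x + b • y) = a • u + b • v := by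
    simp [u, v, ← WithLp.toLp_smul, ← WithLp.toLp_add, hab]
  have hray : ¬SameRay ℝ (a • u) (b • v) := by
    intro h
    obtain ⟨r, -, hr⟩ := h.exists_pos_left (by simp [u, ha.ne']) (by simp [v, hb.ne'])
    have hfst : r * a = b := by simpa [u, v] using congrArg (fun w => w.fst) hr
    have hsnd : (r * a) • x = b • y := by simpa [u, v, smul_smul] using congrArg (fun w => w.snd) hr
    rw [hfst] at hsnd
    exact hxy (smul_right_injective E hb.ne' hsnd)
  simp only [sqrt_one_add_norm_sq_eq_norm_toLp, hcomb, smul_eq_mul]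
  calc ‖a • u + b • v‖ < ‖a • u‖ + ‖b • v‖ := norm_add_lt_of_not_sameRay hray
    _ = a * ‖u‖ + b * ‖v‖ := by
      rw [norm_smul, norm_smul, Real.norm_of_nonneg ha.le, Real.norm_of_nonneg hb.le]

lemma strictConvexOn_one_add_norm_sq_rpow_div_two {p : ℝ} (hp : 1 ≤ p) :
    StrictConvexOn ℝ univ (fun x : E => (1 + ‖x‖ ^ 2) ^ (p / 2)) := by
  have hsqrt : (fun x : E => (1 + ‖x‖ ^ 2) ^ (p / 2)) = fun x => √(1 + ‖x‖ ^ 2) ^ p :=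
    funext fun x => rpow_div_two_eq_sqrt p (by positivity)
  rw [hsqrt]
  refine ⟨convex_univ, fun x _ y _ hxy a b ha hb hab => ?_⟩
  calc √(1 + ‖a • x + b • y‖ ^ 2) ^ p
      < (a * √(1 + ‖x‖ ^ 2) + b * √(1 + ‖y‖ ^ 2)) ^ p :=
        rpow_lt_rpow (sqrt_nonneg _)
          (strictConvexOn_sqrt_one_add_norm_sq.2 trivial trivial hxy ha hb hab) (by linarith)
    _ ≤ a * √(1 + ‖x‖ ^ 2) ^ p + b * √(1 + ‖y‖ ^ 2) ^ p :=
        (convexOn_rpow hp).2 (sqrt_nonneg _) (sqrt_nonneg _) ha.le hb.le hab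

lemma hasFDerivAt_one_add_norm_sq_rpow (s : ℝ) (x : E) :
    HasFDerivAt (fun y : E => (1 + ‖y‖ ^ 2) ^ s)
      ((2 * s * (1 + ‖x‖ ^ 2) ^ (s - 1)) • innerSL ℝ x) x := by
  have h := ((hasStrictFDerivAt_norm_sq x).hasFDerivAt.const_add 1).rpow_const
    (p := s) (Or.inl (by positivity))
  convert h using 1
  ext v
  simp only [smul_apply, coe_innerSL_apply, smul_eq_mul, nsmul_eq_mul, Nat.cast_ofNat]
  ring

lemma fderiv_one_add_norm_sq_rpow (s : ℝ) :
    fderiv ℝ (fun y : E => (1 + ‖y‖ ^ 2) ^ s) =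
      fun y => (2 * s * (1 + ‖y‖ ^ 2) ^ (s - 1)) • innerSL ℝ y :=
  funext fun y => (hasFDerivAt_one_add_norm_sq_rpow s y).fderiv

lemma iteratedFDeriv_two_one_add_norm_sq_rpow_apply (s : ℝ) (x z : E) :
    iteratedFDeriv ℝ 2 (fun y : E => (1 + ‖y‖ ^ 2) ^ s) x ![z, z] =
      2 * s * (1 + ‖x‖ ^ 2) ^ (s - 1) * ‖z‖ ^ 2
        + 4 * s * (s - 1) * (1 + ‖x‖ ^ 2) ^ (s - 2) * ⟪x, z⟫ ^ 2 := by
  have h : HasFDerivAt (fun y : E => (2 * s * (1 + ‖y‖ ^ 2) ^ (s - 1)) • innerSL ℝ y) _ x :=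
    ((hasFDerivAt_one_add_norm_sq_rpow (s - 1) x).const_mul (2 * s)).smul
      (innerSL ℝ (E := E)).hasFDerivAt
  rw [iteratedFDeriv_two_apply, fderiv_one_add_norm_sq_rpow, h.fderiv, sub_sub, one_add_one_eq_two]
  simp only [Matrix.cons_val_zero, Matrix.cons_val_one, Matrix.cons_val_fin_one, add_apply,
    smul_apply, ContinuousLinearMap.smulRight_apply, coe_innerSL_apply, smul_eq_mul]
  rw [innerSL_apply_apply, real_inner_self_eq_norm_sq]
  ring

lemma mul_rpow_sub_two_mul_norm_sq_le_iteratedFDeriv_two {p : ℝ} (hp : 1 ≤ p) (x z : E) :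
    p * (1 + ‖x‖ ^ 2) ^ (p / 2 - 2) * ‖z‖ ^ 2 ≤
      iteratedFDeriv ℝ 2 (fun y : E => (1 + ‖y‖ ^ 2) ^ (p / 2)) x ![z, z] := by
  have hA : 0 < 1 + ‖x‖ ^ 2 := by positivity
  have hpow : (1 + ‖x‖ ^ 2) ^ (p / 2 - 1) = (1 + ‖x‖ ^ 2) ^ (p / 2 - 2) * (1 + ‖x‖ ^ 2) := by
    rw [← rpow_add_one hA.ne']
    ring_nf
  have hcs : ⟪x, z⟫ ^ 2 ≤ ‖x‖ ^ 2 * ‖z‖ ^ 2 := by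
    rw [← mul_pow, ← sq_abs]
    exact pow_le_pow_left₀ (abs_nonneg _) (abs_real_inner_le_norm x z) 2
  have hfactor : ‖z‖ ^ 2 ≤ (1 + ‖x‖ ^ 2) * ‖z‖ ^ 2 + (p - 2) * ⟪x, z⟫ ^ 2 := by
    nlinarith [sq_nonneg ⟪x, z⟫]
  rw [iteratedFDeriv_two_one_add_norm_sq_rpow_apply, hpow]
  have hc : 0 ≤ p * (1 + ‖x‖ ^ 2) ^ (p / 2 - 2) := by positivity
  calc p * (1 + ‖x‖ ^ 2) ^ (p / 2 - 2) * ‖z‖ ^ 2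
      ≤ p * (1 + ‖x‖ ^ 2) ^ (p / 2 - 2) * ((1 + ‖x‖ ^ 2) * ‖z‖ ^ 2 + (p - 2) * ⟪x, z⟫ ^ 2) :=
        mul_le_mul_of_nonneg_left hfactor hc
    _ = _ := by ring

theorem stmt_19_general (δ : ℝ) (hδ1 : 1 ≤ δ) (d : ℕ)
    (V : EuclideanSpace ℝ (Fin d) → ℝ)
    (hV : ∀ x : EuclideanSpace ℝ (Fin d), V x = -(1 + ‖x‖ ^ 2) ^ (δ / 2)) :
    (∀ x z : EuclideanSpace ℝ (Fin d),
      (iteratedFDeriv ℝ 2 V x) ![z, z] ≤ -δ * (1 + ‖x‖ ^ 2) ^ (δ / 2 - 2) * ‖z‖ ^ 2) ∧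
    (∀ x z : EuclideanSpace ℝ (Fin d), z ≠ 0 → (iteratedFDeriv ℝ 2 V x) ![z, z] < 0) ∧
    StrictConcaveOn ℝ Set.univ V := by
  have hVF : V = -fun y => (1 + ‖y‖ ^ 2) ^ (δ / 2) := funext hV
  have hessian (x z : EuclideanSpace ℝ (Fin d)) :
      (iteratedFDeriv ℝ 2 V x) ![z, z] ≤ -δ * (1 + ‖x‖ ^ 2) ^ (δ / 2 - 2) * ‖z‖ ^ 2 := by
    rw [hVF, iteratedFDeriv_neg_apply, neg_apply, neg_mul, neg_mul, neg_le_neg_iff]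
    exact mul_rpow_sub_two_mul_norm_sq_le_iteratedFDeriv_two hδ1 x z
  refine ⟨hessian, fun x z hz => (hessian x z).trans_lt ?_, ?_⟩
  · have : 0 < δ * (1 + ‖x‖ ^ 2) ^ (δ / 2 - 2) * ‖z‖ ^ 2 := by
      have := norm_pos_iff.mpr hz
      positivity
    linarith
  · rw [hVF]
    exact (strictConvexOn_one_add_norm_sq_rpow_div_two hδ1).neg

theorem stmt_19 (δ : ℝ) (hδ1 : 1 ≤ δ) (hδ2 : δ < 2) (d : ℕ) (hd : 1 ≤ d)
    (V : EuclideanSpace ℝ (Fin d) → ℝ)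
    (hV : ∀ x : EuclideanSpace ℝ (Fin d), V x = -(1 + ‖x‖ ^ 2) ^ (δ / 2)) :
    (∀ x z : EuclideanSpace ℝ (Fin d),
      (iteratedFDeriv ℝ 2 V x) ![z, z] ≤ -δ * (1 + ‖x‖ ^ 2) ^ (δ / 2 - 2) * ‖z‖ ^ 2) ∧
    (∀ x z : EuclideanSpace ℝ (Fin d), z ≠ 0 → (iteratedFDeriv ℝ 2 V x) ![z, z] < 0) ∧
    StrictConcaveOn ℝ Set.univ V :=
  stmt_19_general δ hδ1 d V hV
end
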